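/- arXiv:0906.2866 — 5 statements merged into one kernel-verified Lean document; each statement's English description precedes it below -/
import Mathlib

section
/- Let X and Y be sets and let F : 𝒫(X) → 𝒫(Y) be a monotone predicate transformer (U ⊆ V implies F(U) ⊆ F(V)). Then there exist a set X' together with relations s ⊆ X' × X and r ⊆ Y × X' such that F = ⟨r⟩ ∘ [s]. Concretely, one may take X' = 𝒫(X), (U, x) ∈ s ↔ x ∈ U, and (y, U) ∈ r ↔ y ∈ F(U). -/
universe u v

variable {X Y : Type*}

/-- Angelic predicate transformer: `⟨r⟩(V) = {x | ∃ y, (x,y) ∈ r ∧ y ∈ V}`. -/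
def angel (r : Set (X × Y)) (V : Set Y) : Set X := {x | ∃ y, (x, y) ∈ r ∧ y ∈ V}

/-- Demonic predicate transformer: `[r](V) = {x | ∀ y, (x,y) ∈ r → y ∈ V}`. -/
def demon (r : Set (X × Y)) (V : Set Y) : Set X := {x | ∀ y, (x, y) ∈ r → y ∈ V}

/-- Orthogonality predicate transformer: `r^⊥(V) = {x | ∀ y ∈ V, (x,y) ∈ r}`. -/
def orth (r : Set (X × Y)) (V : Set Y) : Set X := {x | ∀ y ∈ V, (x, y) ∈ r}

/-- Converse relation: `(y,x) ∈ conv r ↔ (x,y) ∈ r`. -/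
def conv (r : Set (X × Y)) : Set (Y × X) := {p | (p.2, p.1) ∈ r}

theorem monotone_factorization (F : Set X → Set Y) (hF : Monotone F) :
    ∃ (s : Set (Set X × X)) (r : Set (Y × Set X)),
      (∀ (U : Set X) (x : X), (U, x) ∈ s ↔ x ∈ U) ∧
      (∀ (y : Y) (U : Set X), (y, U) ∈ r ↔ y ∈ F U) ∧
      F = angel r ∘ demon s := by
  refine ⟨{p | p.2 ∈ p.1}, {p | p.1 ∈ F p.2}, fun _ _ => Iff.rfl, fun _ _ => Iff.rfl, ?_⟩
  funext V
  ext y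
  constructor
  · intro hy
    exact ⟨V, hy, fun _ hx => hx⟩
  · rintro ⟨U, hyU, hU⟩
    exact hF (fun x hx => hU x hx) hyU
end

section
/- Let X and Y be sets and let F : 𝒫(X) → 𝒫(Y) be a monotone predicate transformer. Then there exist a set X' and relations s ⊆ X' × X and r ⊆ Y × X' such that F = [r] ∘ ⟨s⟩, and there exist a set X'' and relations s' ⊆ X'' × X and r' ⊆ Y × X'' such that F = r'^⊥ ∘ s'^⊥. -/
universe u v

variable {X Y : Type*}

theorem monotone_factorization_demon_angel_and_orth_orth
    {X : Type u} {Y : Type v} (F : Set X → Set Y) (hF : Monotone F) :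
    (∃ (X' : Type u) (s : Set (X' × X)) (r : Set (Y × X')),
      F = demon r ∘ angel s) ∧
    (∃ (X'' : Type u) (s' : Set (X'' × X)) (r' : Set (Y × X'')),
      F = orth r' ∘ orth s') := by
  constructor
  · refine ⟨Set X, {p | p.2 ∈ p.1}, {p | p.1 ∉ F p.2ᶜ}, ?_⟩
    funext V
    ext y
    simp only [demon, angel, Function.comp, Set.mem_setOf_eq]
    constructor
    · intro hy U hU
      by_contra hc
      push_neg at hc
      have : V ⊆ Uᶜ := fun x hx => fun hxU => (hc x hxU).elim hx
      exact hU (hF this hy)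
    · intro h
      by_contra hy
      obtain ⟨x, hx1, hx2⟩ := h Vᶜ (by simpa using hy)
      exact hx1 hx2
  · refine ⟨Set X, {p | p.2 ∈ p.1}, {p | p.1 ∈ F p.2}, ?_⟩
    funext V
    ext y
    simp only [orth, Function.comp, Set.mem_setOf_eq]
    constructor
    · intro hy U hU
      exact hF hU hy
    · exact fun h => h V (fun x hx => hx)
end

section
/- Let X be a set, F an interior operator on 𝒫(X), and Y a set. Suppose there is a family (U_y)_{y∈Y} of fixed points of F that is a basis for Fix(F), i.e. every fixed point U of F satisfies U = ⋃ { U_y | y ∈ Y, U_y ⊆ U }. Then F has a resolution with interpolant Y: there is a relation r ⊆ X × Y such that F = ⟨r⟩ ∘ [r⁻]; one may take (x, y) ∈ r ↔ x ∈ U_y. -/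
universe u v

variable {X Y : Type*}

theorem interior_resolution_from_basis {X Y : Type*} (F : Set X → Set X)
    (hmono : Monotone F) (hcontr : ∀ U, F U ⊆ U) (hidem : ∀ U, F U ⊆ F (F U))
    (U : Y → Set X) (hfix : ∀ y, F (U y) = U y)
    (hbasis : ∀ V : Set X, F V = V → V = ⋃ y ∈ {y | U y ⊆ V}, U y) :
    ∃ r : Set (X × Y),
      (∀ x y, (x, y) ∈ r ↔ x ∈ U y) ∧ F = angel r ∘ demon (conv r) := by
  refine ⟨{p | p.1 ∈ U p.2}, fun x y => Iff.rfl, ?_⟩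
  funext V
  have hFfix : F (F V) = F V :=
    Set.Subset.antisymm (hcontr _) (hidem _)
  have h := hbasis (F V) hFfix
  ext x
  simp only [Function.comp, angel, demon, conv, Set.mem_setOf_eq]
  constructor
  · intro hx
    rw [h] at hx
    simp only [Set.mem_iUnion, Set.mem_setOf_eq] at hx
    obtain ⟨y, hy, hxy⟩ := hx
    exact ⟨y, hxy, fun x' hx' => hcontr V (hy hx')⟩
  · rintro ⟨y, hxy, hy⟩
    have hUy : U y ⊆ F V := by
      calc U y = F (U y) := (hfix y).symm
        _ ⊆ F V := hmono hy
    exact hUy hxy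
end

section
/- Let X be a set, F an interior operator on 𝒫(X), and suppose (Y, r) is a resolution for F, i.e. r ⊆ X × Y and F = ⟨r⟩ ∘ [r⁻]. For each y ∈ Y set U_y := ⟨r⟩({y}) = {x ∈ X | (x, y) ∈ r}. Then each U_y is a fixed point of F, and the family (U_y)_{y∈Y} is a basis for Fix(F): every fixed point U of F satisfies U = ⋃ { U_y | y ∈ Y, U_y ⊆ U }. -/
universe u v

variable {X Y : Type*}

theorem basis_from_resolution {X Y : Type*} (F : Set X → Set X)
    (hmono : Monotone F) (hcontr : ∀ U, F U ⊆ U) (hidem : ∀ U, F U ⊆ F (F U))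
    (r : Set (X × Y)) (hres : F = angel r ∘ demon (conv r)) :
    (∀ y : Y, F {x | (x, y) ∈ r} = {x | (x, y) ∈ r}) ∧
    (∀ U : Set X, F U = U →
      U = ⋃ y ∈ {y : Y | {x | (x, y) ∈ r} ⊆ U}, {x | (x, y) ∈ r}) := by
  have hF : ∀ U : Set X, F U = {x | ∃ y, (x, y) ∈ r ∧ ∀ x', (x', y) ∈ r → x' ∈ U} := by
    intro U; rw [hres]; rfl
  constructor
  · intro y
    apply Set.Subset.antisymm (hcontr _)
    intro x hx
    rw [hF]
    exact ⟨y, hx, fun x' h => h⟩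
  · intro U hU
    apply Set.Subset.antisymm
    · intro x hx
      rw [← hU, hF] at hx
      obtain ⟨y, hxy, hsub⟩ := hx
      exact Set.mem_biUnion (show y ∈ {y : Y | {x | (x, y) ∈ r} ⊆ U} from fun x' h => hsub x' h) hxy
    · intro x hx
      obtain ⟨_, ⟨y, rfl⟩, _, ⟨hy, rfl⟩, hxy⟩ := hx
      exact hy hxy
end

section
/- Let X be a set and F a closure operator on 𝒫(X). Then F has resolutions in both of the following forms: there exist a set Y and a relation r ⊆ X × Y such that F = [r] ∘ ⟨r⁻⟩, and there exist a set Y' and a relation r' ⊆ X × Y' such that F = r'^⊥ ∘ (r'⁻)^⊥. -/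
universe u v

variable {X Y : Type*}

theorem closure_has_resolutions {X : Type u} (F : Set X → Set X)
    (hmono : Monotone F) (hexp : ∀ U, U ⊆ F U) (hidem : ∀ U, F (F U) ⊆ F U) :
    (∃ (Y : Type u) (r : Set (X × Y)), F = demon r ∘ angel (conv r)) ∧
    (∃ (Y' : Type u) (r' : Set (X × Y')), F = orth r' ∘ orth (conv r')) := by
  have key : ∀ U : Set X, F U = {x | ∀ A : Set X, U ⊆ F A → x ∈ F A} := by
    intro U
    ext x
    constructor
    · intro hx A hUA
      exact hidem A (hmono hUA hx)
    · intro h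
      exact h U (hexp U)
  constructor
  · refine ⟨Set X, {p | p.1 ∉ F p.2}, ?_⟩
    funext U
    rw [key U]
    ext x
    simp only [demon, angel, conv, Function.comp, Set.mem_setOf_eq]
    constructor
    · intro h A hxA
      by_contra hne
      push_neg at hne
      exact hxA (h A fun z hz => by
        by_contra hc
        exact hne z hc hz)
    · intro h A hUA
      by_contra hx
      obtain ⟨z, hz1, hz2⟩ := h A hx
      exact hz1 (hUA hz2)
  · refine ⟨Set X, {p | p.1 ∈ F p.2}, ?_⟩
    funext U
    rw [key U]
    ext x
    simp only [orth, conv, Function.comp, Set.mem_setOf_eq]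
    constructor
    · intro h A hA
      exact h A hA
    · intro h A hA
      exact h A hA
end
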